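/- Let k ≥ 2, let w ∈ {right, down}^{k−1} be the step word of a stair Γ with k boxes, and let v : {0,…,k−1} → ℤ be its favorite condition. Then: (a) Σ_{i=0}^{k−1} v(i) = 0, i.e. the favorite condition is a stability condition; and (b) for every submodule substair S with ∅ ≠ S ≠ {0,…,k−1}, Σ_{i∈S} v(i) > 0. (This is the Remark that every toric G-constellation 𝓕 is stable with respect to its own favorite condition θ_𝓕.) -/

import Mathlib

/-- A step of a stair: a right step `+(1,0)` or a down step `+(0,-1)`. -/
inductive Step
  | right
  | down
deriving DecidableEq, BEq

/-- Box `i` of a stair with `k` boxes and step word `w` is a generator. -/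
def IsGenBox (k : ℕ) (w : ℕ → Step) (i : ℕ) : Prop :=
  (i = 0 ∨ w (i - 1) = Step.down) ∧ (i = k - 1 ∨ w i = Step.right)

/-- Box `i` of a stair with `k` boxes and step word `w` is an antigenerator. -/
def IsAntigenBox (k : ℕ) (w : ℕ → Step) (i : ℕ) : Prop :=
  (i = 0 ∨ w (i - 1) = Step.right) ∧ (i = k - 1 ∨ w i = Step.down)

instance (k : ℕ) (w : ℕ → Step) : DecidablePred (IsGenBox k w) := fun i => by
  unfold IsGenBox; infer_instance

instance (k : ℕ) (w : ℕ → Step) : DecidablePred (IsAntigenBox k w) := fun i => by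
  unfold IsAntigenBox; infer_instance

/-- The favorite condition of the stair with `k` boxes and step word `w`:
`-2` on interior generators, `-1` on extremal generators, `+2` on interior antigenerators,
`+1` on extremal antigenerators and `0` elsewhere. -/
def fav (k : ℕ) (w : ℕ → Step) (i : ℕ) : ℤ :=
  if IsGenBox k w i then (if i = 0 ∨ i = k - 1 then -1 else -2)
  else if IsAntigenBox k w i then (if i = 0 ∨ i = k - 1 then 1 else 2)
  else 0

/-- A subset `S` of the boxes `{0, …, k-1}` is a submodule substair: it is closed under
right steps forwards and under down steps backwards; these are exactly the subsets spanning
a `G`-equivariant `ℂ[x,y]`-submodule of the associated toric `G`-constellation. -/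
def IsSubmoduleSubstair (k : ℕ) (w : ℕ → Step) (S : Finset ℕ) : Prop :=
  S ⊆ Finset.range k ∧
  ∀ i : ℕ, i < k - 1 →
    (i ∈ S → w i = Step.right → i + 1 ∈ S) ∧
    (i + 1 ∈ S → w i = Step.down → i ∈ S)

/-!
Give a right step the weight `-1` and a down step the weight `+1`. The favorite condition of a box
is the weight of the step leaving it minus the weight of the step entering it. Summing over a set
`S` of boxes, the steps with both ends in `S` cancel, and what remains is the signed weight of the
steps crossing the boundary of `S`. For a submodule substair a step leaving `S` is a down step and
a step entering `S` is a right step, so every crossing step contributes `+1`: the sum is the number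
of crossing steps. There are none for the whole stair, and at least one for a proper nonempty `S`
since the stair is connected.
-/

open Finset

def Step.weight : Step → ℤ
  | .right => -1
  | .down => 1

lemma fav_eq_weight_sub_weight {k : ℕ} (hk : 2 ≤ k) (w : ℕ → Step) {i : ℕ} (hi : i < k) :
    fav k w i =
      (if i + 1 < k then (w i).weight else 0) - (if i = 0 then 0 else (w (i - 1)).weight) := by
  rcases Nat.eq_zero_or_pos i with rfl | hi0
  · have : 0 ≠ k - 1 := by omega
    cases hw : w 0 <;> simp [fav, IsGenBox, IsAntigenBox, hw, Step.weight, this, (by omega : 1 < k)]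
  · rcases (by omega : i = k - 1 ∨ i + 1 < k) with hik | hik
    · obtain rfl : k = i + 1 := by omega
      cases hw : w (i - 1) <;> simp [fav, IsGenBox, IsAntigenBox, hw, Step.weight, hi0.ne']
    · have : i ≠ k - 1 := by omega
      cases hw : w i <;> cases hw' : w (i - 1) <;>
        simp [fav, IsGenBox, IsAntigenBox, hw, hw', Step.weight, hi0.ne', hik, this]

lemma sum_fav_eq_sum_weight {k : ℕ} (hk : 2 ≤ k) (w : ℕ → Step) {S : Finset ℕ}
    (hS : S ⊆ range k) :
    ∑ i ∈ S, fav k w i = ∑ i ∈ range (k - 1),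
      (w i).weight * ((if i ∈ S then 1 else 0) - (if i + 1 ∈ S then 1 else 0)) := by
  obtain ⟨n, rfl⟩ : ∃ n, k = n + 1 := ⟨k - 1, by omega⟩
  have hfav : ∀ i ∈ range (n + 1), (if i ∈ S then (1 : ℤ) else 0) * fav (n + 1) w i =
      (if i ∈ S then 1 else 0) * (if i < n then (w i).weight else 0) -
        (if i ∈ S then 1 else 0) * (if i = 0 then 0 else (w (i - 1)).weight) := fun i hi => by
    simp only [fav_eq_weight_sub_weight hk w (mem_range.1 hi), mul_sub, Nat.add_lt_add_iff_right]
  calc ∑ i ∈ S, fav (n + 1) w i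
      = ∑ i ∈ range (n + 1), (if i ∈ S then (1 : ℤ) else 0) * fav (n + 1) w i := by
        simp only [boole_mul, sum_ite_mem, inter_eq_right.mpr hS]
    _ = ∑ i ∈ range n, (if i ∈ S then 1 else 0) * (w i).weight -
          ∑ i ∈ range n, (if i + 1 ∈ S then 1 else 0) * (w i).weight := by
        rw [sum_congr rfl hfav, sum_sub_distrib, sum_range_succ, sum_range_succ']
        simp only [lt_irrefl, if_false, if_true, mul_zero, add_zero, Nat.add_one_ne_zero,
          Nat.add_sub_cancel]
        congr 1
        exact sum_congr rfl fun i hi => by rw [if_pos (mem_range.1 hi)]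
    _ = _ := by
        rw [Nat.add_sub_cancel, ← sum_sub_distrib]
        exact sum_congr rfl fun i _ => by ring

theorem IsSubmoduleSubstair.weight_mul_sub {k : ℕ} {w : ℕ → Step} {S : Finset ℕ}
    (hS : IsSubmoduleSubstair k w S) {i : ℕ} (hi : i < k - 1) :
    (w i).weight * ((if i ∈ S then 1 else 0) - (if i + 1 ∈ S then 1 else 0)) =
      if (i ∈ S ↔ i + 1 ∈ S) then 0 else 1 := by
  obtain ⟨hright, hdown⟩ := hS.2 i hi
  by_cases hiS : i ∈ S <;> by_cases hi1S : i + 1 ∈ S <;> cases hw : w i <;>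
    simp_all [Step.weight]

def crossingSteps (k : ℕ) (S : Finset ℕ) : Finset ℕ :=
  {i ∈ range (k - 1) | ¬(i ∈ S ↔ i + 1 ∈ S)}

theorem IsSubmoduleSubstair.sum_fav_eq_card_crossingSteps {k : ℕ} (hk : 2 ≤ k)
    {w : ℕ → Step} {S : Finset ℕ} (hS : IsSubmoduleSubstair k w S) :
    ∑ i ∈ S, fav k w i = #(crossingSteps k S) := by
  rw [sum_fav_eq_sum_weight hk w hS.1, crossingSteps, card_filter, Nat.cast_sum,
    sum_congr rfl fun i hi => hS.weight_mul_sub (mem_range.1 hi)]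
  exact sum_congr rfl fun i _ => by split_ifs <;> simp

lemma isSubmoduleSubstair_range (k : ℕ) (w : ℕ → Step) : IsSubmoduleSubstair k w (range k) :=
  ⟨subset_rfl, fun i hi =>
    ⟨fun _ _ => mem_range.2 (by omega), fun _ _ => mem_range.2 (by omega)⟩⟩

lemma crossingSteps_range (k : ℕ) : crossingSteps k (range k) = ∅ :=
  filter_false_of_mem fun i hi => by simp only [mem_range] at hi ⊢; omega

lemma crossingSteps_nonempty {k : ℕ} {S : Finset ℕ} (hS : S ⊆ range k) (hne : S.Nonempty)
    (hproper : S ≠ range k) : (crossingSteps k S).Nonempty := by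
  by_contra hempty
  have hstep : ∀ i, i + 1 < k → (i ∈ S ↔ i + 1 ∈ S) := fun i hi => by
    by_contra h
    exact hempty ⟨i, mem_filter.2 ⟨mem_range.2 (by omega), h⟩⟩
  have hconst : ∀ i, i < k → (i ∈ S ↔ 0 ∈ S) := fun i hi => by
    induction i with
    | zero => rfl
    | succ i ih => rw [← hstep i hi, ih (by omega)]
  by_cases h0 : 0 ∈ S
  · exact hproper (Subset.antisymm hS fun i hi => (hconst i (mem_range.1 hi)).2 h0)
  · obtain ⟨i, hi⟩ := hne
    exact h0 ((hconst i (mem_range.1 (hS hi))).1 hi)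

/-- For `k ≥ 2` and a stair with `k` boxes and step word `w` with favorite
condition `v`:  (a) `Σ v(i) = 0`, so the favorite condition is a stability condition, and
(b) for every proper nonempty submodule substair `S`, `Σ_{i ∈ S} v(i) > 0`.
(Every toric `G`-constellation is stable for its own favorite condition.) -/
theorem stmt11 (k : ℕ) (hk : 2 ≤ k) (w : ℕ → Step) :
    (∑ i ∈ Finset.range k, fav k w i = 0) ∧
    (∀ S : Finset ℕ, IsSubmoduleSubstair k w S → S.Nonempty → S ≠ Finset.range k →
      0 < ∑ i ∈ S, fav k w i) := by
  refine ⟨?_, fun S hS hne hproper => ?_⟩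
  · rw [(isSubmoduleSubstair_range k w).sum_fav_eq_card_crossingSteps hk, crossingSteps_range,
      card_empty, Nat.cast_zero]
  · rw [hS.sum_fav_eq_card_crossingSteps hk]
    exact_mod_cast (crossingSteps_nonempty hS.1 hne hproper).card_pos
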